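/- Under the same hypotheses as the non-convex finite-horizon bound — E a real inner product space, h > 0, t_k = k·h, f : E × ℝ → ℝ differentiable in x with ‖∇_x f(x;t) − ∇_x f(y;t)‖ ≤ L_{2,0}‖x−y‖, |f(x;t) − f(y;t)| ≤ L_{1,0}‖x−y‖, |f(x;s) − f(x;t)| ≤ L_{0,1}|s−t|, inf_{(x,t)} f(x;t) > −∞, step size α ∈ (0, 2/L_{2,0}), C ≥ 1, v ≥ 0, and sequences with ‖x̂_k − x_{k−1}‖ ≤ vh and x_k = G_k^C(x̂_k), G_k(y) = y − α∇_x f(y;t_k) — it holds that limsup_{K→∞} (1/K)·Σ_{k=1}^{K} ‖∇_x f(x̂_k; t_k)‖ ≤ √( (L_{1,0}·v + L_{0,1})·h / (α − (L_{2,0}/2)α²) ). -/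

import Mathlib

/-!
Each correction starts with a gradient step, and by the descent lemma a gradient step on an
`L`-smooth function lowers it by `ρ ‖∇f‖²` with `ρ = α - L/2 α² > 0`; the remaining steps do not
increase it. Moving from the corrected point to the next prediction (distance `≤ v h`) and from
`t_k` to `t_{k+1}` raises `f` by at most `(L₁₀ v + L₀₁) h`. Telescoping and `f ≥ f_inf` give
`ρ Σ_{k ≤ K} ‖∇f(x̂_k; t_k)‖² ≤ f(x̂₁; t₁) - f_inf + K (L₁₀ v + L₀₁) h`, and Cauchy–Schwarz
turns this bound on the mean square into the bound on the limsup of the mean.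
-/

open Filter Finset
open scoped RealInnerProductSpace

section Descent

variable {E : Type*} [NormedAddCommGroup E] [InnerProductSpace ℝ E]
  {f : E → ℝ} {g : E → E} {L : ℝ}

theorem image_add_le_of_lipschitz_gradient
    (hgrad : ∀ x, HasFDerivAt f (innerSL ℝ (g x)) x)
    (hlip : ∀ x y, ‖g x - g y‖ ≤ L * ‖x - y‖) (y d : E) :
    f (y + d) ≤ f y + ⟪g y, d⟫ + L / 2 * ‖d‖ ^ 2 := by
  set ψ : ℝ → ℝ := fun s => f (y + s • d) - s * ⟪g y, d⟫ - L / 2 * ‖d‖ ^ 2 * s ^ 2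
  have hψ : ∀ s, HasDerivAt ψ (⟪g (y + s • d) - g y, d⟫ - L * ‖d‖ ^ 2 * s) s := by
    intro s
    have hline : HasDerivAt (fun s : ℝ => y + s • d) d s := by
      simpa using ((hasDerivAt_id s).smul_const d).const_add y
    refine ((((hgrad _).comp_hasDerivAt s hline).sub
      ((hasDerivAt_id s).mul_const ⟪g y, d⟫)).sub
      ((hasDerivAt_pow 2 s).const_mul (L / 2 * ‖d‖ ^ 2))).congr_deriv ?_
    simp only [innerSL_apply_apply, inner_sub_left, Nat.cast_ofNat]
    ring
  have hinner_le : ∀ s, 0 ≤ s → ⟪g (y + s • d) - g y, d⟫ ≤ L * ‖d‖ ^ 2 * s := fun s hs =>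
    calc ⟪g (y + s • d) - g y, d⟫ ≤ ‖g (y + s • d) - g y‖ * ‖d‖ := real_inner_le_norm _ _
      _ ≤ L * ‖s • d‖ * ‖d‖ := by gcongr; simpa using hlip (y + s • d) y
      _ = L * ‖d‖ ^ 2 * s := by rw [norm_smul, Real.norm_of_nonneg hs]; ring
  have hanti : AntitoneOn ψ (Set.Ici 0) :=
    antitoneOn_of_hasDerivWithinAt_nonpos (convex_Ici 0)
      (fun s _ => (hψ s).continuousAt.continuousWithinAt)
      (fun s _ => (hψ s).hasDerivWithinAt)
      (fun s hs => sub_nonpos.mpr (hinner_le s (le_of_lt (by simpa using hs))))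
  have := hanti Set.self_mem_Ici (Set.mem_Ici.mpr zero_le_one) zero_le_one
  simp only [ψ, one_smul, zero_smul, add_zero] at this
  linarith

theorem image_sub_smul_le (hgrad : ∀ x, HasFDerivAt f (innerSL ℝ (g x)) x)
    (hlip : ∀ x y, ‖g x - g y‖ ≤ L * ‖x - y‖) (α : ℝ) (y : E) :
    f (y - α • g y) ≤ f y - (α - L / 2 * α ^ 2) * ‖g y‖ ^ 2 := by
  have := image_add_le_of_lipschitz_gradient hgrad hlip y (-(α • g y))
  rw [inner_neg_right, real_inner_smul_right, real_inner_self_eq_norm_sq, norm_neg, norm_smul,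
    Real.norm_eq_abs, mul_pow, sq_abs, ← sub_eq_add_neg] at this
  linarith

theorem image_iterate_sub_smul_le (hgrad : ∀ x, HasFDerivAt f (innerSL ℝ (g x)) x)
    (hlip : ∀ x y, ‖g x - g y‖ ≤ L * ‖x - y‖) {α : ℝ} (hα : 0 ≤ α - L / 2 * α ^ 2)
    {n : ℕ} (hn : 1 ≤ n) (y : E) :
    f ((fun y => y - α • g y)^[n] y) ≤ f y - (α - L / 2 * α ^ 2) * ‖g y‖ ^ 2 := by
  have hmono : ∀ m y, f ((fun y => y - α • g y)^[m] y) ≤ f y := by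
    intro m
    induction m with
    | zero => intro y; rfl
    | succ m ih =>
      intro y
      rw [Function.iterate_succ_apply]
      linarith [ih (y - α • g y), image_sub_smul_le hgrad hlip α y,
        mul_nonneg hα (sq_nonneg ‖g y‖)]
  obtain ⟨m, rfl⟩ := Nat.exists_eq_add_of_le' hn
  rw [Function.iterate_succ_apply]
  exact (hmono m _).trans (image_sub_smul_le hgrad hlip α y)

end Descent

theorem nonneg_of_abs_sub_le_mul_norm {E : Type*} [NormedAddCommGroup E] [Nontrivial E]
    {φ : E → ℝ} {L : ℝ} (hφ : ∀ x y, |φ x - φ y| ≤ L * ‖x - y‖) : 0 ≤ L := by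
  obtain ⟨x, y, hxy⟩ := exists_pair_ne E
  have hpos : 0 < ‖x - y‖ := norm_pos_iff.mpr (sub_ne_zero.mpr hxy)
  exact nonneg_of_mul_nonneg_left ((abs_nonneg _).trans (hφ x y)) hpos

theorem sum_Icc_le_of_le_sub_mul_add {a u : ℕ → ℝ} {c B m : ℝ} (hc : 0 < c)
    (hstep : ∀ k, 1 ≤ k → a (k + 1) ≤ a k - c * u k + B) (hm : ∀ k, m ≤ a k) (K : ℕ) :
    ∑ k ∈ Icc 1 K, u k ≤ (a 1 - m) / c + K * (B / c) := by
  have htele : ∀ K : ℕ, c * ∑ k ∈ Icc 1 K, u k ≤ a 1 - a (K + 1) + K * B := by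
    intro K
    induction K with
    | zero => simp
    | succ K ih =>
      rw [sum_Icc_succ_top (by omega), mul_add]
      push_cast
      linarith [hstep (K + 1) (by omega)]
  rw [← mul_div_assoc, ← add_div, le_div_iff₀' hc]
  linarith [htele K, hm (K + 1)]

theorem avg_le_sqrt_of_sum_sq_le {u : ℕ → ℝ} {D B : ℝ} {K : ℕ} (hK : 1 ≤ K)
    (hsum : ∑ k ∈ Icc 1 K, u k ^ 2 ≤ D + K * B) :
    1 / (K : ℝ) * ∑ k ∈ Icc 1 K, u k ≤ √(B + D / K) := by
  have hKpos : (0 : ℝ) < K := by exact_mod_cast hK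
  have hcs : (∑ k ∈ Icc 1 K, u k) ^ 2 ≤ K * ∑ k ∈ Icc 1 K, u k ^ 2 := by
    simpa using sq_sum_le_card_mul_sum_sq (s := Icc 1 K) (f := u)
  apply Real.le_sqrt_of_sq_le
  rw [mul_pow, one_div, inv_pow, inv_mul_le_iff₀ (by positivity)]
  calc (∑ k ∈ Icc 1 K, u k) ^ 2 ≤ K * (D + K * B) := hcs.trans (by gcongr)
    _ = K ^ 2 * (B + D / K) := by field_simp; ring

theorem limsup_avg_le_sqrt_of_sum_sq_le {u : ℕ → ℝ} {D B : ℝ} (hu : ∀ k, 0 ≤ u k)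
    (hsum : ∀ K : ℕ, ∑ k ∈ Icc 1 K, u k ^ 2 ≤ D + K * B) :
    limsup (fun K : ℕ => 1 / (K : ℝ) * ∑ k ∈ Icc 1 K, u k) atTop ≤ √B := by
  have hlim : Tendsto (fun K : ℕ => √(B + D / K)) atTop (nhds √B) := by
    have := tendsto_const_nhds (x := B).add
      (tendsto_const_nhds (x := D).div_atTop tendsto_natCast_atTop_atTop)
    rw [add_zero] at this
    exact (Real.continuous_sqrt.tendsto B).comp this
  rw [← hlim.limsup_eq]
  refine limsup_le_limsup ?_ ?_ hlim.isBoundedUnder_le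
  · filter_upwards [eventually_ge_atTop 1] with K hK
    exact avg_le_sqrt_of_sum_sq_le hK (hsum K)
  · exact isCoboundedUnder_le_of_le atTop fun K =>
      mul_nonneg (by positivity) (sum_nonneg fun k _ => hu k)

theorem image_le_of_iterate_sub_smul {E : Type*} [NormedAddCommGroup E] [InnerProductSpace ℝ E]
    {f : E → ℝ → ℝ} {g : E → ℝ → E} {L20 L10 L01 α : ℝ}
    (hgrad : ∀ x t, HasFDerivAt (fun y => f y t) (innerSL ℝ (g x t)) x)
    (hlipg : ∀ x y t, ‖g x t - g y t‖ ≤ L20 * ‖x - y‖)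
    (hlipfx : ∀ x y t, |f x t - f y t| ≤ L10 * ‖x - y‖)
    (hlipft : ∀ x s t, |f x s - f x t| ≤ L01 * |s - t|)
    (hα : 0 ≤ α - L20 / 2 * α ^ 2) {n : ℕ} (hn : 1 ≤ n) (x x' : E) (t t' : ℝ) :
    f x' t' ≤ f x t - (α - L20 / 2 * α ^ 2) * ‖g x t‖ ^ 2
      + L10 * ‖x' - (fun y => y - α • g y t)^[n] x‖ + L01 * |t' - t| := by
  have hdescent := image_iterate_sub_smul_le (hgrad · t) (hlipg · · t) hα hn x
  have hspace := (abs_le.mp (hlipfx x' ((fun y => y - α • g y t)^[n] x) t)).2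
  have htime := (abs_le.mp (hlipft x' t' t)).2
  linarith

theorem sharp_nonconvex_tracking_error_general
    {E : Type*} [NormedAddCommGroup E] [InnerProductSpace ℝ E]
    (h : ℝ) (hh : 0 < h)
    (f : E → ℝ → ℝ) (g : E → ℝ → E)
    (hgrad : ∀ (x : E) (t : ℝ), HasFDerivAt (fun y => f y t) (innerSL ℝ (g x t)) x)
    (L20 L10 L01 : ℝ)
    (hlipg : ∀ (x y : E) (t : ℝ), ‖g x t - g y t‖ ≤ L20 * ‖x - y‖)
    (hlipfx : ∀ (x y : E) (t : ℝ), |f x t - f y t| ≤ L10 * ‖x - y‖)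
    (hlipft : ∀ (x : E) (s t : ℝ), |f x s - f x t| ≤ L01 * |s - t|)
    (finf : ℝ) (hfinf : ∀ (x : E) (t : ℝ), finf ≤ f x t)
    (α : ℝ) (hα0 : 0 < α) (hα2 : α < 2 / L20)
    (C : ℕ) (hC : 1 ≤ C) (v : ℝ)
    (xhat xc : ℕ → E)
    (hacc : ∀ k : ℕ, 1 ≤ k → ‖xhat k - xc (k - 1)‖ ≤ v * h)
    (hcorr : ∀ k : ℕ, 1 ≤ k →
      xc k = (fun y => y - α • g y ((k : ℝ) * h))^[C] (xhat k)) :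
    Filter.limsup (fun K : ℕ =>
        (1 / (K : ℝ)) * ∑ k ∈ Finset.Icc 1 K, ‖g (xhat k) ((k : ℝ) * h)‖)
      Filter.atTop
      ≤ Real.sqrt ((L10 * v + L01) * h / (α - L20 / 2 * α ^ 2)) := by
  rcases subsingleton_or_nontrivial E with hE | hE
  · simp only [Subsingleton.elim _ (0 : E), norm_zero, sum_const_zero, mul_zero, limsup_const]
    exact Real.sqrt_nonneg _
  have hL20 : 0 < L20 := by
    rcases div_pos_iff.mp (hα0.trans hα2) with h | h
    exacts [h.2, absurd h.1 (by norm_num)]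
  have hρ : 0 < α - L20 / 2 * α ^ 2 := by nlinarith [(lt_div_iff₀ hL20).mp hα2]
  have hL10 : 0 ≤ L10 := nonneg_of_abs_sub_le_mul_norm (hlipfx · · 0)
  have hstep : ∀ k, 1 ≤ k → f (xhat (k + 1)) ((k + 1 : ℕ) * h) ≤ f (xhat k) (k * h)
      - (α - L20 / 2 * α ^ 2) * ‖g (xhat k) (k * h)‖ ^ 2 + (L10 * v + L01) * h := by
    intro k hk
    have hmove := image_le_of_iterate_sub_smul hgrad hlipg hlipfx hlipft hρ.le hC
      (xhat k) (xhat (k + 1)) (k * h) ((k + 1 : ℕ) * h)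
    have hjump : ‖xhat (k + 1) - xc k‖ ≤ v * h := hacc (k + 1) (by omega)
    have hdt : |((k + 1 : ℕ) : ℝ) * h - k * h| = h := by
      rw [Nat.cast_succ, add_one_mul, add_sub_cancel_left, abs_of_pos hh]
    rw [← hcorr k hk, hdt] at hmove
    linarith [mul_le_mul_of_nonneg_left hjump hL10]
  exact limsup_avg_le_sqrt_of_sum_sq_le (fun k => norm_nonneg _)
    (sum_Icc_le_of_le_sub_mul_add (a := fun k => f (xhat k) (k * h)) hρ hstep
      (fun k => hfinf _ _))

/-- Asymptotic bound for the SHARP algorithm on (possibly non-convex)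
objectives: the averaged gradient norms at the predictions satisfy
`limsup_K (1/K)Σ_{k=1}^K ‖∇_x f(x̂_k;t_k)‖ ≤ √((L₁₀v + L₀₁)h/(α − (L₂₀/2)α²))`. -/
theorem sharp_nonconvex_tracking_error
    {E : Type*} [NormedAddCommGroup E] [InnerProductSpace ℝ E]
    (h : ℝ) (hh : 0 < h)
    (f : E → ℝ → ℝ) (g : E → ℝ → E)
    (hgrad : ∀ (x : E) (t : ℝ), HasFDerivAt (fun y => f y t) (innerSL ℝ (g x t)) x)
    (L20 L10 L01 : ℝ) (hL20 : 0 < L20)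
    (hlipg : ∀ (x y : E) (t : ℝ), ‖g x t - g y t‖ ≤ L20 * ‖x - y‖)
    (hlipfx : ∀ (x y : E) (t : ℝ), |f x t - f y t| ≤ L10 * ‖x - y‖)
    (hlipft : ∀ (x : E) (s t : ℝ), |f x s - f x t| ≤ L01 * |s - t|)
    (finf : ℝ) (hfinf : ∀ (x : E) (t : ℝ), finf ≤ f x t)
    (α : ℝ) (hα0 : 0 < α) (hα2 : α < 2 / L20)
    (C : ℕ) (hC : 1 ≤ C) (v : ℝ) (hv : 0 ≤ v)
    (xhat xc : ℕ → E)
    (hacc : ∀ k : ℕ, 1 ≤ k → ‖xhat k - xc (k - 1)‖ ≤ v * h)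
    (hcorr : ∀ k : ℕ, 1 ≤ k →
      xc k = (fun y => y - α • g y ((k : ℝ) * h))^[C] (xhat k)) :
    Filter.limsup (fun K : ℕ =>
        (1 / (K : ℝ)) * ∑ k ∈ Finset.Icc 1 K, ‖g (xhat k) ((k : ℝ) * h)‖)
      Filter.atTop
      ≤ Real.sqrt ((L10 * v + L01) * h / (α - L20 / 2 * α ^ 2)) :=
  sharp_nonconvex_tracking_error_general h hh f g hgrad L20 L10 L01 hlipg hlipfx hlipft finf hfinf α
    hα0 hα2 C hC v xhat xc hacc hcorr
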